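/- For $\omega \in \mathbb{C}$ with $\Im\,\omega > 0$, the roots of $z^2 - (6-\omega^2)z + 1 = 0$ (the zeros of $R(z) = Q(z) + 2$ multiplied by $z$) come in a reciprocal pair $z_r, 1/z_r$ with $|z_r| < 1$, i.e. neither root lies on the unit circle. -/

import Mathlib

/-! A root `z` of `z² - b z + 1` on the unit circle has `z⁻¹ = conj z` as its partner root, so
`b = z + conj z = 2 Re z` is real with `|b| ≤ 2`. For `b = 6 - ω²` with `Im ω > 0`, reality of `b`
forces `Re ω = 0`, and then `b = 6 + (Im ω)² > 2`. The roots are `r, r⁻¹` since their product is `1`,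
so swapping them if needed gives `‖r‖ < 1`. -/

theorem ne_zero_of_sq_sub_mul_add_one_eq_zero {K : Type*} [Field K] {b r : K}
    (hr : r ^ 2 - b * r + 1 = 0) : r ≠ 0 := by
  rintro rfl
  simp at hr

theorem sq_sub_mul_add_one_eq_mul_inv {K : Type*} [Field K] {b r : K}
    (hr : r ^ 2 - b * r + 1 = 0) (z : K) :
    z ^ 2 - b * z + 1 = (z - r) * (z - r⁻¹) := by
  have hr0 := ne_zero_of_sq_sub_mul_add_one_eq_zero hr
  have hb : b = r + r⁻¹ := by
    field_simp
    linear_combination -hr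
  rw [hb]
  field_simp
  ring

theorem Complex.exists_sq_sub_mul_add_one_eq_zero (b : ℂ) : ∃ r : ℂ, r ^ 2 - b * r + 1 = 0 := by
  obtain ⟨d, hd⟩ := IsAlgClosed.exists_eq_mul_self (b ^ 2 - 4)
  exact ⟨(b + d) / 2, by linear_combination -hd / 4⟩

theorem Complex.eq_two_mul_re_of_norm_eq_one {b z : ℂ} (hz : ‖z‖ = 1)
    (h : z ^ 2 - b * z + 1 = 0) : b = 2 * z.re := by
  have hz0 := ne_zero_of_sq_sub_mul_add_one_eq_zero h
  have hconj : z * starRingEnd ℂ z = 1 := by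
    rw [Complex.mul_conj, Complex.normSq_eq_norm_sq, hz]
    norm_num
  apply mul_left_cancel₀ hz0
  rw [← Complex.ofReal_ofNat, ← Complex.ofReal_mul, ← Complex.add_conj]
  linear_combination -h - hconj

theorem six_sub_sq_ne_two_mul_of_im_pos {ω : ℂ} (hω : 0 < ω.im) {x : ℝ} (hx : |x| ≤ 1) :
    6 - ω ^ 2 ≠ 2 * x := by
  intro h
  have him : ω.re * ω.im = 0 := by
    have := congrArg Complex.im h
    simp [pow_two] at this
    linarith
  have hre : ω.re = 0 := (mul_eq_zero.mp him).resolve_right hω.ne'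
  have := congrArg Complex.re h
  simp [pow_two, hre] at this
  nlinarith [(abs_le.mp hx).2]

theorem norm_ne_one_of_sq_sub_mul_add_one_eq_zero {ω : ℂ} (hω : 0 < ω.im) {z : ℂ}
    (hz : z ^ 2 - (6 - ω ^ 2) * z + 1 = 0) : ‖z‖ ≠ 1 := fun h =>
  six_sub_sq_ne_two_mul_of_im_pos hω ((Complex.abs_re_le_norm z).trans h.le)
    (Complex.eq_two_mul_re_of_norm_eq_one h hz)

/-- For `ω : ℂ` with `Im ω > 0`, the roots of `z² - (6 - ω²)z + 1 = 0` come in a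
reciprocal pair `z_r, z_r⁻¹` with `|z_r| < 1`; in particular no root lies on the
unit circle. -/
theorem stmt1 (ω : ℂ) (hω : 0 < ω.im) :
    ∃ zr : ℂ, zr ≠ 0 ∧ zr * zr⁻¹ = 1 ∧ ‖zr‖ < 1 ∧
      (∀ z : ℂ, z ^ 2 - (6 - ω ^ 2) * z + 1 = (z - zr) * (z - zr⁻¹)) ∧
      ∀ z : ℂ, z ^ 2 - (6 - ω ^ 2) * z + 1 = 0 → ‖z‖ ≠ 1 := by
  have no_root_on_circle : ∀ z : ℂ, z ^ 2 - (6 - ω ^ 2) * z + 1 = 0 → ‖z‖ ≠ 1 :=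
    fun _ => norm_ne_one_of_sq_sub_mul_add_one_eq_zero hω
  obtain ⟨r, hr⟩ := Complex.exists_sq_sub_mul_add_one_eq_zero (6 - ω ^ 2)
  have hr0 := ne_zero_of_sq_sub_mul_add_one_eq_zero hr
  rcases (no_root_on_circle r hr).lt_or_gt with hlt | hgt
  · exact ⟨r, hr0, mul_inv_cancel₀ hr0, hlt, sq_sub_mul_add_one_eq_mul_inv hr,
      no_root_on_circle⟩
  · refine ⟨r⁻¹, inv_ne_zero hr0, by rw [inv_inv, inv_mul_cancel₀ hr0], ?_, fun z => ?_,
      no_root_on_circle⟩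
    · rw [norm_inv]
      exact inv_lt_one_of_one_lt₀ hgt
    · rw [inv_inv, sq_sub_mul_add_one_eq_mul_inv hr z, mul_comm]
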